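/- arXiv:2211.01062 — 6 statements merged into one kernel-verified Lean document; each statement's English description precedes it below -/
import Mathlib

section
/- Let F be a field, n = k + l + 2 for naturals k, l, let a_1, ..., a_n be distinct elements of F, and let g, h ∈ F[t] be polynomials with deg g ≤ k, deg h ≤ l, and h(a_i) ≠ 0 for all i. Then the determinant of the n×n matrix whose i-th row is (a_i^l·c_i, a_i^{l-1}·c_i, ..., c_i, a_i^k, a_i^{k-1}, ..., 1), where c_i = g(a_i)/h(a_i), equals 0. -/
/-!
Write `c i = g(a i) / h(a i)`. The coefficient vector `(h_l, …, h_0, -g_k, …, -g_0)` pairs with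
the `i`-th row to give `c i · h(a i) - g(a i) = 0`, so it lies in the kernel of the matrix; it is
nonzero because `h ≠ 0`, hence the determinant vanishes.
-/

open Polynomial Finset

theorem Polynomial.sum_range_coeff_mul_pow_reflect {R : Type*} [Semiring R] {p : R[X]} {d : ℕ}
    (hp : p.natDegree ≤ d) (x : R) :
    ∑ j ∈ range (d + 1), p.coeff (d - j) * x ^ (d - j) = p.eval x := by
  simpa only [Nat.add_sub_cancel] using
    (sum_range_reflect (fun m => p.coeff m * x ^ m) (d + 1)).trans
      (eval_eq_sum_range' (Nat.lt_succ_of_le hp) x).symm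

section RationalRows

variable {R : Type*} [CommRing R] {k l : ℕ} {g h : R[X]}

def rationalRelationVector (k l : ℕ) (g h : R[X]) (j : ℕ) : R :=
  if j ≤ l then h.coeff (l - j) else -g.coeff (k + l + 1 - j)

theorem sum_range_rationalRow_mul_rationalRelationVector (hg : g.natDegree ≤ k)
    (hh : h.natDegree ≤ l) (x c : R) :
    ∑ j ∈ range (k + l + 2),
        (if j ≤ l then x ^ (l - j) * c else x ^ (k + l + 1 - j)) *
          rationalRelationVector k l g h j =
      c * h.eval x - g.eval x := by
  rw [show k + l + 2 = (l + 1) + (k + 1) by omega, sum_range_add, sub_eq_add_neg]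
  congr 1
  · rw [← sum_range_coeff_mul_pow_reflect hh, mul_sum]
    refine sum_congr rfl fun j hj => ?_
    have hjl : j ≤ l := Nat.lt_succ_iff.mp (mem_range.mp hj)
    simp only [rationalRelationVector, if_pos hjl]
    ring
  · rw [← sum_range_coeff_mul_pow_reflect hg, ← sum_neg_distrib]
    refine sum_congr rfl fun j _ => ?_
    have hkj : k + l + 1 - (l + 1 + j) = k - j := by omega
    simp only [rationalRelationVector, if_neg (show ¬l + 1 + j ≤ l by omega), hkj]
    ring

theorem rationalRelationVector_ne_zero (hh : h.natDegree ≤ l) (h0 : h ≠ 0) :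
    (fun j : Fin (k + l + 2) => rationalRelationVector k l g h j) ≠ 0 := by
  intro hv
  have hlead := congrFun hv ⟨l - h.natDegree, by omega⟩
  simp only [rationalRelationVector, Pi.zero_apply, if_pos (Nat.sub_le l _),
    Nat.sub_sub_self hh] at hlead
  exact leadingCoeff_ne_zero.mpr h0 hlead

theorem det_rationalRows_eq_zero [IsDomain R] (a c : Fin (k + l + 2) → R)
    (hg : g.natDegree ≤ k) (hh : h.natDegree ≤ l) (h0 : h ≠ 0)
    (hc : ∀ i, c i * h.eval (a i) = g.eval (a i)) :
    (Matrix.of fun i j : Fin (k + l + 2) =>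
        if (j : ℕ) ≤ l then a i ^ (l - (j : ℕ)) * c i
        else a i ^ (k + l + 1 - (j : ℕ))).det = 0 := by
  refine Matrix.exists_mulVec_eq_zero_iff.mp
    ⟨_, rationalRelationVector_ne_zero (g := g) hh h0, funext fun i => ?_⟩
  have hrow := sum_range_rationalRow_mul_rationalRelationVector hg hh (a i) (c i)
  rw [hc i, sub_self, ← Fin.sum_univ_eq_sum_range] at hrow
  exact hrow

end RationalRows

theorem stmt_2_general (F : Type*) [Field F] (k l : ℕ) (a : Fin (k + l + 2) → F)
    (g h : Polynomial F)
    (hg : g.natDegree ≤ k) (hh : h.natDegree ≤ l)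
    (hne : ∀ i, h.eval (a i) ≠ 0) :
    (Matrix.of fun i j : Fin (k + l + 2) =>
        if (j : ℕ) ≤ l then a i ^ (l - (j : ℕ)) * (g.eval (a i) / h.eval (a i))
        else a i ^ (k + l + 1 - (j : ℕ))).det = 0 := by
  have h0 : h ≠ 0 := fun h0 => hne 0 (by simp [h0])
  exact det_rationalRows_eq_zero a _ hg hh h0 fun i => div_mul_cancel₀ _ (hne i)

theorem stmt_2 (F : Type*) [Field F] (k l : ℕ) (a : Fin (k + l + 2) → F)
    (ha : Function.Injective a) (g h : Polynomial F)
    (hg : g.natDegree ≤ k) (hh : h.natDegree ≤ l)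
    (hne : ∀ i, h.eval (a i) ≠ 0) :
    (Matrix.of fun i j : Fin (k + l + 2) =>
        if (j : ℕ) ≤ l then a i ^ (l - (j : ℕ)) * (g.eval (a i) / h.eval (a i))
        else a i ^ (k + l + 1 - (j : ℕ))).det = 0 :=
  stmt_2_general F k l a g h hg hh hne
end

section
/- Let F be a field, a_1, ..., a_n distinct elements of F, and let p ∈ F[x_1,...,x_n]. Then p vanishes under the substitution x_i ← z·∏_{j≠i}(y - a_j) (as a polynomial identity in F[y,z]) if and only if p vanishes under the substitution x_i ← z'/(y - a_i) (as an identity in the field of rational functions F(y, z')). -/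
/-!
Write `y = X 0`, `z = X 1` and `q = ∏ⱼ (y - aⱼ)`. The substitution `z ↦ z q(y)` is an
injective endomorphism of `R[y, z]` (it has the left inverse `z ↦ z / q(y)` into the fraction
field), so it extends to a field endomorphism `σ` (`mulZFrac`) of `R(y, z)`. Since
`σ (z / (y - aᵢ)) = z ∏_{j ≠ i} (y - aⱼ)`, `σ` carries the rational substitution of `p` to the
polynomial one, and being injective it preserves and reflects vanishing.
-/

open MvPolynomial

namespace ShpilkaVolkovich

variable {R : Type*} [CommRing R]

local notation "R₂" => MvPolynomial (Fin 2) R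
local notation "K₂" => FractionRing (MvPolynomial (Fin 2) R)

noncomputable def mulZ (q : Polynomial R) : R₂ →ₐ[R] R₂ :=
  aeval ![X 0, X 1 * q.toMvPolynomial 0]

lemma mulZ_toMvPolynomial (q r : Polynomial R) :
    mulZ q (r.toMvPolynomial 0) = r.toMvPolynomial 0 := by
  rw [mulZ, aeval_toMvPolynomial, Matrix.cons_val_zero]
  rfl

lemma mulZ_X_one (q : Polynomial R) : mulZ q (X 1) = X 1 * q.toMvPolynomial 0 := by
  simp [mulZ]

lemma toMvPolynomial_X_sub_C (c : R) :
    (Polynomial.X - Polynomial.C c).toMvPolynomial 0 = (X 0 - C c : R₂) := by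
  simp [Polynomial.toMvPolynomial_C]

lemma toMvPolynomial_nodal {ι : Type*} (s : Finset ι) (a : ι → R) :
    (Lagrange.nodal s a).toMvPolynomial 0 = ∏ j ∈ s, (X 0 - C (a j) : R₂) := by
  simp only [Lagrange.nodal, map_prod, toMvPolynomial_X_sub_C]

lemma algebraMap_toMvPolynomial_ne_zero {r : Polynomial R} (hr : r ≠ 0) :
    algebraMap R₂ K₂ (r.toMvPolynomial 0) ≠ 0 :=
  (map_ne_zero_iff _ (IsFractionRing.injective R₂ K₂)).mpr <|
    (map_ne_zero_iff _ (Polynomial.toMvPolynomial_injective 0)).mpr hr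

variable [IsDomain R]

noncomputable def divZ (q : Polynomial R) : R₂ →ₐ[R] K₂ :=
  aeval ![algebraMap R₂ K₂ (X 0), algebraMap R₂ K₂ (X 1) / algebraMap R₂ K₂ (q.toMvPolynomial 0)]

lemma divZ_toMvPolynomial (q r : Polynomial R) :
    divZ q (r.toMvPolynomial 0) = algebraMap R₂ K₂ (r.toMvPolynomial 0) := by
  rw [divZ, aeval_toMvPolynomial, Matrix.cons_val_zero, Polynomial.toMvPolynomial,
    ← IsScalarTower.toAlgHom_apply R, Polynomial.aeval_algHom_apply]
  rfl

lemma divZ_comp_mulZ {q : Polynomial R} (hq : q ≠ 0) :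
    (divZ q).comp (mulZ q) = IsScalarTower.toAlgHom R R₂ K₂ := by
  refine algHom_ext (Fin.forall_fin_two.mpr ⟨by simp [mulZ, divZ], ?_⟩)
  rw [AlgHom.comp_apply, mulZ_X_one, map_mul, divZ_toMvPolynomial]
  simp [divZ, div_mul_cancel₀ _ (algebraMap_toMvPolynomial_ne_zero hq)]

lemma mulZ_injective {q : Polynomial R} (hq : q ≠ 0) : Function.Injective (mulZ q) := by
  apply Function.Injective.of_comp (f := divZ q)
  rw [← AlgHom.coe_comp, divZ_comp_mulZ hq]
  exact IsFractionRing.injective R₂ K₂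

noncomputable def mulZFrac {q : Polynomial R} (hq : q ≠ 0) : K₂ →ₐ[R] K₂ :=
  IsFractionRing.liftAlgHom (g := (IsScalarTower.toAlgHom R R₂ K₂).comp (mulZ q))
    ((IsFractionRing.injective R₂ K₂).comp (mulZ_injective hq))

lemma mulZFrac_algebraMap {q : Polynomial R} (hq : q ≠ 0) (r : R₂) :
    mulZFrac hq (algebraMap R₂ K₂ r) = algebraMap R₂ K₂ (mulZ q r) :=
  IsFractionRing.lift_algebraMap (g := ((IsScalarTower.toAlgHom R R₂ K₂).comp (mulZ q)).toRingHom)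
    ((IsFractionRing.injective R₂ K₂).comp (mulZ_injective hq)) r

lemma mulZFrac_injective {q : Polynomial R} (hq : q ≠ 0) : Function.Injective (mulZFrac hq) :=
  (mulZFrac hq).toRingHom.injective

lemma mulZFrac_X_one_div {q r s : Polynomial R} (hq : q ≠ 0) (hr : r ≠ 0) (hrs : q = r * s) :
    mulZFrac hq (algebraMap R₂ K₂ (X 1) / algebraMap R₂ K₂ (r.toMvPolynomial 0)) =
      algebraMap R₂ K₂ (X 1 * s.toMvPolynomial 0) := by
  rw [map_div₀, mulZFrac_algebraMap, mulZFrac_algebraMap, mulZ_X_one, mulZ_toMvPolynomial,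
    div_eq_iff (algebraMap_toMvPolynomial_ne_zero hr), ← map_mul, hrs,
    map_mul (Polynomial.toMvPolynomial 0)]
  congr 1
  ring

lemma mulZFrac_aeval {ι : Type*} [Fintype ι] [DecidableEq ι] (a : ι → R) (p : MvPolynomial ι R) :
    mulZFrac (Lagrange.nodal_ne_zero (s := .univ) (v := a)) (aeval (R := R) (fun i : ι =>
        algebraMap R₂ K₂ (X 1) / algebraMap R₂ K₂ (X 0 - C (a i))) p) =
      algebraMap R₂ K₂ (aeval (R := R) (fun i : ι =>
        (X 1 * ∏ j ∈ Finset.univ.erase i, (X 0 - C (a j)) : R₂)) p) := by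
  have hsubst (i : ι) :
      mulZFrac (Lagrange.nodal_ne_zero (s := .univ) (v := a))
          (algebraMap R₂ K₂ (X 1) / algebraMap R₂ K₂ (X 0 - C (a i))) =
        IsScalarTower.toAlgHom R R₂ K₂ (X 1 * ∏ j ∈ Finset.univ.erase i, (X 0 - C (a j))) := by
    rw [← toMvPolynomial_X_sub_C, ← toMvPolynomial_nodal]
    exact mulZFrac_X_one_div _ (Polynomial.X_sub_C_ne_zero (a i))
      (Lagrange.nodal_eq_mul_nodal_erase (Finset.mem_univ i))
  rw [comp_aeval_apply, funext hsubst, ← comp_aeval_apply]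
  rfl

end ShpilkaVolkovich

theorem stmt_13_general (F : Type*) [Field F] (n : ℕ) (a : Fin n → F)
    (p : MvPolynomial (Fin n) F) :
    (aeval (R := F) (fun i : Fin n =>
        (X 1 * ∏ j ∈ Finset.univ.erase i, (X 0 - C (a j)) :
          MvPolynomial (Fin 2) F)) p = 0) ↔
    (aeval (R := F) (fun i : Fin n =>
        algebraMap (MvPolynomial (Fin 2) F)
            (FractionRing (MvPolynomial (Fin 2) F)) (X 1) /
          algebraMap (MvPolynomial (Fin 2) F)
            (FractionRing (MvPolynomial (Fin 2) F)) (X 0 - C (a i))) p = 0) := by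
  rw [← map_eq_zero_iff _ (IsFractionRing.injective _ (FractionRing (MvPolynomial (Fin 2) F))),
    ← ShpilkaVolkovich.mulZFrac_aeval,
    map_eq_zero_iff _ (ShpilkaVolkovich.mulZFrac_injective _)]

theorem stmt_13 (F : Type*) [Field F] (n : ℕ) (a : Fin n → F)
    (ha : Function.Injective a) (p : MvPolynomial (Fin n) F) :
    (aeval (R := F) (fun i : Fin n =>
        (X 1 * ∏ j ∈ Finset.univ.erase i, (X 0 - C (a j)) :
          MvPolynomial (Fin 2) F)) p = 0) ↔
    (aeval (R := F) (fun i : Fin n =>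
        algebraMap (MvPolynomial (Fin 2) F)
            (FractionRing (MvPolynomial (Fin 2) F)) (X 1) /
          algebraMap (MvPolynomial (Fin 2) F)
            (FractionRing (MvPolynomial (Fin 2) F)) (X 0 - C (a i))) p = 0) :=
  stmt_13_general F n a p
end

section
/- Let F be a field of size greater than 2, a_1, a_2, a_3 distinct elements of F, and let p ∈ F[x_1,x_2,x_3] be a nonzero homogeneous multilinear polynomial of degree 2 such that p(z/(y-a_1), z/(y-a_2), z/(y-a_3)) = 0 as an identity in F(y,z). If F is infinite, then p is a nonzero scalar multiple of EVC_{0,1}[1,2,3] = (a_1-a_2)x_1x_2 + (a_2-a_3)x_2x_3 + (a_3-a_1)x_3x_1. -/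
/-!
Homogeneity and multilinearity leave only the monomials `x₀x₁`, `x₁x₂`, `x₂x₀`. Substituting
`xᵢ = 1/(y - aᵢ)` and clearing denominators turns the vanishing of `p` into an affine identity in
`y` that holds for all but finitely many `y`; its two coefficients are two linear equations on the
three coefficients of `p`, whose solutions are the multiples of `(a₀ - a₁, a₁ - a₂, a₂ - a₀)`.
-/

open MvPolynomial Finsupp

theorem Finsupp.exists_eq_single_add_single_of_degree_eq_two {σ : Type*} {m : σ →₀ ℕ}
    (hdeg : m.degree = 2) (hle : ∀ i, m i ≤ 1) :
    ∃ i j, i ≠ j ∧ m = single i 1 + single j 1 := by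
  classical
  have hcard : Multiset.card (toMultiset m) = 2 := by
    rw [card_toMultiset, ← hdeg, degree_apply]; rfl
  obtain ⟨i, j, hij⟩ := Multiset.card_eq_two.mp hcard
  have hm : m = single i 1 + single j 1 := by
    rw [← toMultiset_toFinsupp m, hij, ← toMultiset_toFinsupp (single i 1 + single j 1)]
    simp [toMultiset_add, toMultiset_single]
  refine ⟨i, j, fun h => ?_, hm⟩
  have := hle i
  simp [hm, h] at this

namespace MvPolynomial

variable {R σ : Type*} [CommSemiring R]

theorem C_mul_X_mul_X (b : R) (i j : σ) :
    C b * (X i * X j) = monomial (single i 1 + single j 1) b := by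
  rw [X, X, monomial_mul, C_mul_monomial, one_mul, mul_one]

theorem exists_eq_single_add_single_of_mem_support {p : MvPolynomial σ R}
    (hhom : p.IsHomogeneous 2) (hml : ∀ i, p.degreeOf i ≤ 1) {m : σ →₀ ℕ}
    (hm : m ∈ p.support) : ∃ i j, i ≠ j ∧ m = single i 1 + single j 1 :=
  exists_eq_single_add_single_of_degree_eq_two
    (by rw [degree_eq_weight_one]; exact hhom (mem_support_iff.mp hm))
    fun i => (monomial_le_degreeOf i hm).trans (hml i)

theorem eq_of_isHomogeneous_two_of_degreeOf_le_one {p : MvPolynomial (Fin 3) R}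
    (hhom : p.IsHomogeneous 2) (hml : ∀ i, p.degreeOf i ≤ 1) :
    p = C (coeff (single 0 1 + single 1 1) p) * (X 0 * X 1)
      + C (coeff (single 1 1 + single 2 1) p) * (X 1 * X 2)
      + C (coeff (single 2 1 + single 0 1) p) * (X 2 * X 0) := by
  classical
  have hsupp : p.support ⊆
      {single 0 1 + single 1 1, single 1 1 + single 2 1, single 2 1 + single 0 1} := by
    intro m hm
    obtain ⟨i, j, hij, rfl⟩ := exists_eq_single_add_single_of_mem_support hhom hml hm
    fin_cases i <;> fin_cases j <;> simp only [Finset.mem_insert, Finset.mem_singleton] <;>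
      first | exact absurd rfl hij | grind [add_comm]
  conv_lhs => rw [p.as_sum, Finset.sum_subset hsupp fun m _ hm => by
    rw [notMem_support_iff.mp hm, monomial_zero]]
  rw [Finset.sum_insert, Finset.sum_pair, C_mul_X_mul_X, C_mul_X_mul_X, C_mul_X_mul_X, add_assoc]
  · exact fun h => by simpa using DFunLike.congr_fun h 1
  · simp only [Finset.mem_insert, Finset.mem_singleton, not_or]
    exact ⟨fun h => by simpa using DFunLike.congr_fun h 0,
      fun h => by simpa using DFunLike.congr_fun h 1⟩

theorem eval_inv_mul_prod {F : Type*} [Field F] (b₀₁ b₁₂ b₂₀ : F) {x : Fin 3 → F}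
    (hx : ∀ i, x i ≠ 0) :
    eval (fun i => (x i)⁻¹) (C b₀₁ * (X 0 * X 1) + C b₁₂ * (X 1 * X 2) + C b₂₀ * (X 2 * X 0))
        * (x 0 * x 1 * x 2) = b₀₁ * x 2 + b₁₂ * x 0 + b₂₀ * x 1 := by
  have := hx 0; have := hx 1; have := hx 2
  simp only [eval_add, eval_mul, eval_C, eval_X]
  field_simp

end MvPolynomial

theorem eq_zero_of_forall_notMem_mul_eq {F : Type*} [Field F] [Infinite F]
    (s : Finset F) {u v : F} (h : ∀ y ∉ s, u * y = v) : u = 0 ∧ v = 0 := by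
  classical
  obtain ⟨y₁, hy₁⟩ := Infinite.exists_notMem_finset s
  obtain ⟨y₂, hy₂⟩ := Infinite.exists_notMem_finset (insert y₁ s)
  rw [Finset.mem_insert, not_or] at hy₂
  have hu : u = 0 := by
    have : u * (y₂ - y₁) = 0 := by linear_combination h y₂ hy₂.2 - h y₁ hy₁
    exact (mul_eq_zero.mp this).resolve_right (sub_ne_zero.mpr hy₂.1)
  exact ⟨hu, by simpa [hu] using (h y₁ hy₁).symm⟩

theorem exists_eq_mul_sub_of_sum_eq_zero {F : Type*} [Field F] {a₀ a₁ a₂ b₀₁ b₁₂ b₂₀ : F}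
    (ha : a₁ ≠ a₂) (hsum : b₀₁ + b₁₂ + b₂₀ = 0) (hwsum : b₀₁ * a₂ + b₁₂ * a₀ + b₂₀ * a₁ = 0) :
    ∃ c, b₀₁ = c * (a₀ - a₁) ∧ b₁₂ = c * (a₁ - a₂) ∧ b₂₀ = c * (a₂ - a₀) := by
  have ha' : a₁ - a₂ ≠ 0 := sub_ne_zero.mpr ha
  refine ⟨b₁₂ / (a₁ - a₂), ?_, (div_mul_cancel₀ b₁₂ ha').symm, ?_⟩
  · field_simp
    linear_combination a₁ * hsum - hwsum
  · field_simp
    linear_combination hwsum - a₂ * hsum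

theorem stmt_14 (F : Type*) [Field F] [Infinite F] (a : Fin 3 → F)
    (ha : Function.Injective a) (p : MvPolynomial (Fin 3) F) (hp : p ≠ 0)
    (hhom : p.IsHomogeneous 2) (hml : ∀ i, p.degreeOf i ≤ 1)
    (hvan : ∀ y z : F, (∀ i, y ≠ a i) → eval (fun i => z / (y - a i)) p = 0) :
    ∃ c : F, c ≠ 0 ∧
      p = C c * (C (a 0 - a 1) * (X 0 * X 1) + C (a 1 - a 2) * (X 1 * X 2)
        + C (a 2 - a 0) * (X 2 * X 0)) := by
  classical
  have hp_eq := eq_of_isHomogeneous_two_of_degreeOf_le_one hhom hml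
  set b₀₁ := coeff (single 0 1 + single 1 1) p
  set b₁₂ := coeff (single 1 1 + single 2 1) p
  set b₂₀ := coeff (single 2 1 + single 0 1) p
  have hlin : ∀ y ∉ Finset.univ.image a,
      (b₀₁ + b₁₂ + b₂₀) * y = b₀₁ * a 2 + b₁₂ * a 0 + b₂₀ * a 1 := by
    intro y hy
    have hya : ∀ i, y - a i ≠ 0 := fun i =>
      sub_ne_zero.mpr fun h => hy (Finset.mem_image.mpr ⟨i, Finset.mem_univ i, h.symm⟩)
    have hvan_y := hvan y 1 fun i => sub_ne_zero.mp (hya i)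
    simp only [one_div] at hvan_y
    have := eval_inv_mul_prod b₀₁ b₁₂ b₂₀ hya
    rw [← hp_eq, hvan_y, zero_mul] at this
    linear_combination -this
  obtain ⟨hsum, hwsum⟩ := eq_zero_of_forall_notMem_mul_eq _ hlin
  obtain ⟨c, h₀₁, h₁₂, h₂₀⟩ :=
    exists_eq_mul_sub_of_sum_eq_zero (ha.ne (by decide : (1 : Fin 3) ≠ 2)) hsum hwsum
  have hc : c ≠ 0 := by
    rintro rfl
    exact hp (by rw [hp_eq, h₀₁, h₁₂, h₂₀]; simp)
  refine ⟨c, hc, ?_⟩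
  rw [hp_eq, h₀₁, h₁₂, h₂₀]
  simp only [map_mul]
  ring
end

section
/- Let F be an infinite field, a_1, a_2, a_3 distinct elements of F, and let p ∈ F[x_1,x_2,x_3] be a nonzero polynomial in the vanishing ideal of RFE_{0,1}, i.e., p(z/(y-a_1), z/(y-a_2), z/(y-a_3)) = 0 identically in F(y,z). Then p has at least 3 monomials (nonzero coefficients). -/
/-!
Only the slice `z = 1` is needed. On the curve `y ↦ ((y - a i)⁻¹)ᵢ` a monomial `c x^m` takes the
value `c / ∏ i, (y - a i) ^ m i`, which never vanishes, so `p` is not a monomial. If a binomial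
`c x^m + d x^n` vanishes there, clearing denominators gives the polynomial identity
`c ∏ (X - a i) ^ n i = -d ∏ (X - a i) ^ m i` (it holds at infinitely many `y`), and comparing root
multiplicities at the distinct points `a i` forces `m = n`.
-/

section

open Polynomial

variable {F ι : Type*} [Field F] [Fintype ι]

noncomputable def prodXSubCPow (a : ι → F) (m : ι →₀ ℕ) : F[X] :=
  ∏ i, (X - C (a i)) ^ m i

theorem eval_prodXSubCPow (a : ι → F) (m : ι →₀ ℕ) (y : F) :
    (prodXSubCPow a m).eval y = ∏ i, (y - a i) ^ m i := by
  simp [prodXSubCPow, eval_prod]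

theorem eval_prodXSubCPow_ne_zero (a : ι → F) (m : ι →₀ ℕ) {y : F} (hy : ∀ i, y ≠ a i) :
    (prodXSubCPow a m).eval y ≠ 0 := by
  rw [eval_prodXSubCPow]
  exact Finset.prod_ne_zero_iff.mpr fun i _ => pow_ne_zero _ (sub_ne_zero.mpr (hy i))

theorem prodXSubCPow_ne_zero (a : ι → F) (m : ι →₀ ℕ) : prodXSubCPow a m ≠ 0 :=
  Finset.prod_ne_zero_iff.mpr fun i _ => pow_ne_zero _ (X_sub_C_ne_zero (a i))

theorem count_roots_prodXSubCPow [DecidableEq F] {a : ι → F} (ha : Function.Injective a)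
    (m : ι →₀ ℕ) (i : ι) : (prodXSubCPow a m).roots.count (a i) = m i := by
  classical
  rw [prodXSubCPow, roots_prod _ _ (prodXSubCPow_ne_zero a m), Multiset.count_bind]
  simp [Multiset.count_singleton, ha.eq_iff]

theorem eq_of_C_mul_prodXSubCPow_eq {a : ι → F} (ha : Function.Injective a) {m n : ι →₀ ℕ}
    {c d : F} (hc : c ≠ 0) (hd : d ≠ 0) (h : C c * prodXSubCPow a m = C d * prodXSubCPow a n) :
    m = n := by
  classical
  ext i
  have hroots := congrArg roots h
  rw [roots_C_mul _ hc, roots_C_mul _ hd] at hroots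
  rw [← count_roots_prodXSubCPow ha m i, hroots, count_roots_prodXSubCPow ha n i]

theorem eq_of_binomial_vanishes_on_inv_sub [Infinite F] {a : ι → F} (ha : Function.Injective a)
    {m n : ι →₀ ℕ} {c d : F} (hc : c ≠ 0) (hd : d ≠ 0)
    (h : ∀ y, (∀ i, y ≠ a i) → c / (prodXSubCPow a m).eval y + d / (prodXSubCPow a n).eval y = 0) :
    m = n := by
  have hcleared : C c * prodXSubCPow a n + C d * prodXSubCPow a m = 0 := by
    refine eq_zero_of_infinite_isRoot _ ((Set.finite_range a).infinite_compl.mono ?_)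
    intro y hy
    have hy' : ∀ i, y ≠ a i := fun i hi => hy ⟨i, hi.symm⟩
    have hm := eval_prodXSubCPow_ne_zero a m hy'
    have hn := eval_prodXSubCPow_ne_zero a n hy'
    have hvanish := h y hy'
    field_simp at hvanish
    simp only [Set.mem_ofPred_eq, IsRoot, eval_add, eval_mul, eval_C]
    linear_combination hvanish
  refine (eq_of_C_mul_prodXSubCPow_eq ha hc (neg_ne_zero.mpr hd) ?_).symm
  rw [C_neg, neg_mul, eq_neg_iff_add_eq_zero, hcleared]

end

open MvPolynomial

theorem eval_monomial_inv_sub {F ι : Type*} [Field F] [Fintype ι] (a : ι → F) (m : ι →₀ ℕ)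
    (c y : F) :
    eval (fun i => (y - a i)⁻¹) (monomial m c) = c / (prodXSubCPow a m).eval y := by
  rw [eval_monomial, Finsupp.prod_fintype _ _ fun _ => pow_zero _, eval_prodXSubCPow,
    div_eq_mul_inv, ← Finset.prod_inv_distrib]
  simp only [inv_pow]

theorem stmt_15 (F : Type*) [Field F] [Infinite F] (a : Fin 3 → F)
    (ha : Function.Injective a) (p : MvPolynomial (Fin 3) F) (hp : p ≠ 0)
    (hvan : ∀ y z : F, (∀ i, y ≠ a i) → eval (fun i => z / (y - a i)) p = 0) :
    3 ≤ p.support.card := by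
  have hvan₁ : ∀ y, (∀ i, y ≠ a i) → eval (fun i => (y - a i)⁻¹) p = 0 := fun y hy => by
    simpa only [one_div] using hvan y 1 hy
  by_contra! hcard
  interval_cases hsupp : p.support.card
  · exact hp (support_eq_empty.mp (Finset.card_eq_zero.mp hsupp))
  · obtain ⟨m, hm⟩ := Finset.card_eq_one.mp hsupp
    have hp₁ : p = monomial m (coeff m p) := by
      conv_lhs => rw [p.as_sum, hm, Finset.sum_singleton]
    obtain ⟨y₀, hy₀⟩ := (Set.finite_range a).infinite_compl.nonempty
    have hy₀' : ∀ i, y₀ ≠ a i := fun i hi => hy₀ ⟨i, hi.symm⟩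
    have hzero := hvan₁ y₀ hy₀'
    rw [hp₁, eval_monomial_inv_sub, div_eq_zero_iff] at hzero
    exact hzero.elim (mem_support_iff.mp (by simp [hm])) (eval_prodXSubCPow_ne_zero a m hy₀')
  · obtain ⟨m, n, hmn, hm⟩ := Finset.card_eq_two.mp hsupp
    have hp₂ : p = monomial m (coeff m p) + monomial n (coeff n p) := by
      conv_lhs => rw [p.as_sum, hm, Finset.sum_pair hmn]
    have hcm : coeff m p ≠ 0 := mem_support_iff.mp (by simp [hm])
    have hcn : coeff n p ≠ 0 := mem_support_iff.mp (by simp [hm])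
    refine hmn (eq_of_binomial_vanishes_on_inv_sub ha hcm hcn fun y hy => ?_)
    rw [← eval_monomial_inv_sub, ← eval_monomial_inv_sub, ← map_add, ← hp₂]
    exact hvan₁ y hy
end

section
/- Let F be an infinite field, a_1, ..., a_n distinct elements of F, and let p ∈ F[x_1,...,x_n] be a nonzero multilinear polynomial that contains a monomial of degree 1 with nonzero coefficient (i.e., some coefficient of a single variable x_i is nonzero) and whose constant term may be arbitrary. Then there exist y, z ∈ F with y ∉ {a_1,...,a_n} such that p(z/(y-a_1), ..., z/(y-a_n)) ≠ 0. -/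
/-!
Fix `y` off the nodes and substitute `x_i ↦ z / (y - a_i)`: this turns `p` into a polynomial
in `z` whose linear coefficient is `∑ i, c_i / (y - a_i)`, where `c_i` is the coefficient of
`x_i` in `p`. Multiplied by `∏ (y - a_i)`, this sum is the Lagrange interpolant of the nonzero
values `c_i / w_i` (`w_i` the nodal weights), a nonzero polynomial in `y`; so some `y` off the
nodes makes the linear coefficient nonzero, and an infinite field then provides `z`.
-/

open MvPolynomial

section LinearCoefficient

variable {σ R : Type*} [CommSemiring R]

lemma aeval_C_mul_X_monomial (c : σ → R) (u : σ →₀ ℕ) (r : R) :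
    aeval (fun i => Polynomial.C (c i) * Polynomial.X) (monomial u r) =
      Polynomial.C (r * u.prod fun i k => c i ^ k) * Polynomial.X ^ (u.sum fun _ k => k) := by
  simp only [aeval_monomial, Finsupp.prod, Finsupp.sum, mul_pow, Finset.prod_mul_distrib,
    Finset.prod_pow_eq_pow_sum, Polynomial.algebraMap_eq, map_mul, map_prod, Polynomial.C_pow,
    mul_assoc]

lemma eval_aeval_C_mul_X (c : σ → R) (p : MvPolynomial σ R) (z : R) :
    (aeval (fun i => Polynomial.C (c i) * Polynomial.X) p).eval z =
      eval (fun i => c i * z) p := by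
  rw [← Polynomial.coe_aeval_eq_eval, comp_aeval_apply]
  simp

lemma coeff_one_aeval_C_mul_X [Fintype σ] (c : σ → R) (p : MvPolynomial σ R) :
    (aeval (fun i => Polynomial.C (c i) * Polynomial.X) p).coeff 1 =
      ∑ i, p.coeff (Finsupp.single i 1) * c i := by
  classical
  induction p using MvPolynomial.induction_on' with
  | monomial u r =>
    rw [aeval_C_mul_X_monomial, Polynomial.coeff_C_mul_X_pow]
    by_cases hu : (u.sum fun _ k => k) = 1
    · obtain ⟨i, rfl⟩ := (Finsupp.sum_eq_one_iff u).mp hu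
      simp [coeff_monomial, Finsupp.single_left_inj]
    · rw [if_neg (Ne.symm hu)]
      refine (Finset.sum_eq_zero fun i _ => ?_).symm
      rw [coeff_monomial, if_neg (by rintro rfl; simp at hu), zero_mul]
  | add p q hp hq => simp [hp, hq, Finset.sum_add_distrib, add_mul]

end LinearCoefficient

open Lagrange in
lemma exists_sum_mul_inv_sub_ne_zero {F ι : Type*} [Field F] [Infinite F] [Fintype ι]
    {v : ι → F} (hv : Function.Injective v) {c : ι → F} (hc : c ≠ 0) :
    ∃ x, (∀ i, x ≠ v i) ∧ ∑ i, c i * (x - v i)⁻¹ ≠ 0 := by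
  classical
  have hvs : Set.InjOn v (Finset.univ : Finset ι) := hv.injOn
  have hw (i : ι) : nodalWeight Finset.univ v i ≠ 0 := nodalWeight_ne_zero hvs (Finset.mem_univ i)
  set r : ι → F := fun i => c i / nodalWeight Finset.univ v i
  set P := interpolate Finset.univ v r
  have hP : P ≠ 0 := by
    obtain ⟨i, hi⟩ := Function.ne_iff.mp hc
    intro h
    have hPi : P.eval (v i) = r i := eval_interpolate_at_node r hvs (Finset.mem_univ i)
    rw [h, Polynomial.eval_zero, eq_comm, div_eq_zero_iff] at hPi
    exact hPi.elim hi (hw i)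
  obtain ⟨x, hx⟩ := Infinite.exists_notMem_finset (P.roots.toFinset ∪ Finset.univ.image v)
  simp only [Finset.mem_union, Multiset.mem_toFinset, Polynomial.mem_roots hP, Polynomial.IsRoot,
    Finset.mem_image, Finset.mem_univ, true_and, not_or, not_exists] at hx
  obtain ⟨hPx, hxv⟩ := hx
  have hxv' (i : ι) : x ≠ v i := Ne.symm (hxv i)
  refine ⟨x, hxv', ?_⟩
  rw [eval_interpolate_not_at_node r fun i _ => hxv' i] at hPx
  convert right_ne_zero_of_mul hPx using 2 with i
  simp only [r]
  field_simp [hw i]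

theorem stmt_16_general (F : Type*) [Field F] [Infinite F] (n : ℕ) (a : Fin n → F)
    (ha : Function.Injective a) (p : MvPolynomial (Fin n) F)
    (hlin : ∃ i, p.coeff (Finsupp.single i 1) ≠ 0) :
    ∃ y z : F, (∀ i, y ≠ a i) ∧ eval (fun i => z / (y - a i)) p ≠ 0 := by
  obtain ⟨y, hya, hy⟩ := exists_sum_mul_inv_sub_ne_zero ha
    (c := fun i => p.coeff (Finsupp.single i 1)) (Function.ne_iff.mpr hlin)
  have hq : aeval (fun i => Polynomial.C (y - a i)⁻¹ * Polynomial.X) p ≠ 0 := fun h => hy <| by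
    rw [← coeff_one_aeval_C_mul_X, h, Polynomial.coeff_zero]
  obtain ⟨z, hz⟩ := not_forall.mp (mt (Polynomial.zero_of_eval_zero _) hq)
  refine ⟨y, z, hya, ?_⟩
  simpa only [eval_aeval_C_mul_X, div_eq_inv_mul] using hz

theorem stmt_16 (F : Type*) [Field F] [Infinite F] (n : ℕ) (a : Fin n → F)
    (ha : Function.Injective a) (p : MvPolynomial (Fin n) F)
    (hp : p ≠ 0) (hml : ∀ i, p.degreeOf i ≤ 1)
    (hlin : ∃ i, p.coeff (Finsupp.single i 1) ≠ 0) :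
    ∃ y z : F, (∀ i, y ≠ a i) ∧ eval (fun i => z / (y - a i)) p ≠ 0 :=
  stmt_16_general F n a ha p hlin
end

section
/- Let F be a field and a_1, ..., a_n distinct elements of F with n = k + l + 2. Then the (k+l+2)×(k+l+2) matrix whose i-th row is (a_i^{k+l+1}, a_i^{k+l}, ..., a_i, 1) has nonzero determinant; consequently, the polynomial EVC_{k,l}(x_1,...,x_n), defined as the determinant of the matrix with i-th row (a_i^l x_i, ..., a_i x_i, x_i, a_i^k, ..., a_i, 1), is a nonzero polynomial: its coefficient on the monomial x_1 x_2 ⋯ x_{l+1} equals ± the product of two Vandermonde determinants (on a_1,...,a_{l+1} and on a_{l+2},...,a_{k+l+2}) and is nonzero. -/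
/-!
The entries of EVC in a column `j ≤ l` are `C (a i ^ (l - j)) * X i`, so the term of a
permutation `σ` in the Leibniz expansion is a constant times the monomial `∏_{j ≤ l} X (σ j)`.
Hence the coefficient of `X 0 ⋯ X l` collects exactly the permutations preserving `{0, …, l}`,
i.e. the nonzero terms of the block-diagonal matrix whose blocks are reversed Vandermonde
matrices in `a 0, …, a l` and in `a (l + 1), …, a (k + l + 1)`. A reversed Vandermonde
determinant is `∏_{i < j} (a i - a j)`, which is nonzero for distinct `a i`.
-/

open MvPolynomial Matrix Finset

theorem Finset.sum_single_one_inj {n : Type*} [DecidableEq n] {T S : Finset n} :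
    (∑ i ∈ T, Finsupp.single i 1 : n →₀ ℕ) = ∑ i ∈ S, Finsupp.single i 1 ↔ T = S := by
  refine ⟨fun h => ?_, fun h => h ▸ rfl⟩
  ext x
  have := DFunLike.congr_fun h x
  simp only [Finsupp.finsetSum_apply, Finsupp.single_apply, Finset.sum_ite_eq'] at this
  split_ifs at this <;> simp_all

theorem Finset.map_filter_perm_eq_self_iff {n : Type*} [Fintype n] (p : n → Prop)
    [DecidablePred p] (σ : Equiv.Perm n) :
    (univ.filter p).map σ.toEmbedding = univ.filter p ↔ ∀ j, p (σ j) ↔ p j := by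
  simp only [Finset.ext_iff, Finset.mem_map_equiv, mem_filter, mem_univ, true_and]
  exact ⟨fun h j => by simpa using (h (σ j)).symm,
    fun h x => by simpa using (h (σ.symm x)).symm⟩

theorem Finset.prod_prod_Ioi_comp_eq_prod_filter {ι M : Type*} [Fintype ι] [LinearOrder ι]
    [CommMonoid M] {q : ι → Prop} [DecidablePred q] {m : ℕ} (e : Fin m ≃ {x // q x})
    (he : StrictMono e) (g : ι → ι → M) :
    ∏ i, ∏ j ∈ Ioi i, g (e i) (e j) =
      ∏ p ∈ univ.filter (fun p : ι × ι => q p.1 ∧ q p.2 ∧ p.1 < p.2), g p.1 p.2 := by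
  rw [prod_sigma']
  refine prod_bij' (fun x _ => ((e x.1 : ι), (e x.2 : ι)))
    (fun p hp =>
      ⟨e.symm ⟨p.1, (mem_filter.1 hp).2.1⟩, e.symm ⟨p.2, (mem_filter.1 hp).2.2.1⟩⟩)
    ?_ ?_ ?_ ?_ fun _ _ => rfl
  · rintro ⟨i, j⟩ h
    simp only [mem_sigma, mem_univ, mem_Ioi, true_and] at h
    simpa [mem_filter] using ⟨(e i).2, (e j).2, he h⟩
  · rintro ⟨p₁, p₂⟩ h
    simp only [mem_filter, mem_univ, true_and] at h
    simp only [mem_sigma, mem_univ, mem_Ioi, true_and]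
    rw [← he.lt_iff_lt]
    simpa using h.2.2
  · rintro ⟨i, j⟩ _
    simp
  · rintro ⟨p₁, p₂⟩ _
    simp

theorem Finset.prod_sub_swap {ι R : Type*} [CommRing R] (s : Finset ι) (f g : ι → R) :
    ∏ x ∈ s, (f x - g x) = (-1) ^ #s * ∏ x ∈ s, (g x - f x) := by
  rw [← prod_neg]
  simp_rw [neg_sub]

theorem Matrix.det_of_pow_rev {R : Type*} [CommRing R] {n : ℕ} (v : Fin n → R) :
    (of fun i j : Fin n => v i ^ (n - 1 - (j : ℕ))).det = ∏ i, ∏ j ∈ Ioi i, (v i - v j) := by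
  convert det_projVandermonde 1 v using 3 with i j
  · ext i j
    simp only [of_apply, projVandermonde_apply, Pi.one_apply, one_pow, one_mul, Fin.val_rev]
    congr 1
    omega
  · simp

theorem Matrix.det_toSquareBlockProp_of_pow {ι R : Type*} [Fintype ι] [LinearOrder ι]
    [CommRing R] {q : ι → Prop} [DecidablePred q] {m : ℕ} (e : Fin m ≃ {x // q x})
    (he : StrictMono e) (v : ι → R) (d : ι → ℕ) (hd : ∀ i, d (e i) = m - 1 - i) :
    (toSquareBlockProp (of fun i j => v i ^ d j) q).det =
      ∏ p ∈ univ.filter (fun p : ι × ι => q p.1 ∧ q p.2 ∧ p.1 < p.2), (v p.1 - v p.2) := by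
  rw [← det_submatrix_equiv_self e,
    ← prod_prod_Ioi_comp_eq_prod_filter e he fun x y => v x - v y, ← det_of_pow_rev]
  congr
  ext i j
  simp [toSquareBlockProp_def, hd]

def Fin.subtypeNotLtEquiv {m n N : ℕ} (h : m + n = N) :
    Fin n ≃ {i : Fin N // ¬(i : ℕ) < m} where
  toFun j := ⟨⟨m + j, by omega⟩, by simp⟩
  invFun i := ⟨i - m, by omega⟩
  left_inv j := by ext; simp
  right_inv i := by ext; simp; omega

theorem Fin.strictMono_subtypeNotLtEquiv {m n N : ℕ} (h : m + n = N) :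
    StrictMono (subtypeNotLtEquiv h) :=
  fun _ _ hij => Nat.add_lt_add_left hij m

theorem Fin.strictMono_castLEquiv {n m : ℕ} (h : n ≤ m) : StrictMono (castLEquiv h) :=
  fun _ _ hij => hij

theorem MvPolynomial.coeff_det_ite_C_mul_X {n R : Type*} [Fintype n] [DecidableEq n]
    [CommRing R] (p : n → Prop) [DecidablePred p] (A B : Matrix n n R) :
    coeff (∑ i ∈ univ.filter p, Finsupp.single i 1)
        (of fun i j => if p j then C (A i j) * X i else C (B i j) :
          Matrix n n (MvPolynomial n R)).det =
      (toSquareBlockProp A p).det * (toSquareBlockProp B fun i => ¬p i).det := by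
  set c : Matrix n n R := of fun i j => if p j then A i j else B i j
  have hterm (σ : Equiv.Perm n) :
      ∏ j, (of fun i j => if p j then C (A i j) * X i else C (B i j) :
          Matrix n n (MvPolynomial n R)) (σ j) j =
        monomial (∑ i ∈ (univ.filter p).map σ.toEmbedding, Finsupp.single i 1)
          (∏ j, c (σ j) j) := by
    rw [sum_map, sum_filter, monomial_sum_prod]
    refine prod_congr rfl fun j _ => ?_
    by_cases hj : p j
    · simp only [c, of_apply, hj, if_true]
      exact C_mul_X_eq_monomial
    · simp only [c, of_apply, hj, if_false]
      exact C_apply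
  calc _ = (of fun i j => if (p i ↔ p j) then c i j else 0).det := by
        rw [det_apply', det_apply', coeff_sum]
        refine sum_congr rfl fun σ _ => ?_
        rw [← zsmul_eq_mul, coeff_smul, hterm, zsmul_eq_mul]
        simp only [coeff_monomial, sum_single_one_inj, map_filter_perm_eq_self_iff, of_apply,
          Fintype.prod_ite_zero]
    _ = _ := by
        rw [twoBlockTriangular_det _ p fun i hi j hj => by simp [hi, hj]]
        congr 2 <;> ext i j <;> simp [toSquareBlockProp_def, c, i.2, j.2]

theorem exists_coeff_evc_eq_neg_one_pow_mul {R : Type*} [CommRing R] (k l : ℕ)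
    (a : Fin (k + l + 2) → R) :
    ∃ c : ℕ, coeff (∑ i ∈ univ.filter (fun i : Fin (k + l + 2) => (i : ℕ) < l + 1),
        Finsupp.single i 1)
      (of fun i j : Fin (k + l + 2) =>
          if (j : ℕ) ≤ l then C (a i ^ (l - (j : ℕ))) * X i
          else (C (a i ^ (k + l + 1 - (j : ℕ))) : MvPolynomial (Fin (k + l + 2)) R)).det =
      (-1) ^ c *
        ((∏ p ∈ univ.filter (fun p : Fin (k + l + 2) × Fin (k + l + 2) =>
            (p.1 : ℕ) < (p.2 : ℕ) ∧ (p.2 : ℕ) < l + 1), (a p.2 - a p.1)) *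
          ∏ p ∈ univ.filter (fun p : Fin (k + l + 2) × Fin (k + l + 2) =>
            l + 1 ≤ (p.1 : ℕ) ∧ (p.1 : ℕ) < (p.2 : ℕ)), (a p.2 - a p.1)) := by
  set s₁ := univ.filter fun p : Fin (k + l + 2) × Fin (k + l + 2) =>
    (p.1 : ℕ) < (p.2 : ℕ) ∧ (p.2 : ℕ) < l + 1
  set s₂ := univ.filter fun p : Fin (k + l + 2) × Fin (k + l + 2) =>
    l + 1 ≤ (p.1 : ℕ) ∧ (p.1 : ℕ) < (p.2 : ℕ)
  have hs₁ : univ.filter (fun p : Fin (k + l + 2) × Fin (k + l + 2) =>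
      (p.1 : ℕ) < l + 1 ∧ (p.2 : ℕ) < l + 1 ∧ p.1 < p.2) = s₁ :=
    filter_congr fun p _ => by rw [Fin.lt_def]; omega
  have hs₂ : univ.filter (fun p : Fin (k + l + 2) × Fin (k + l + 2) =>
      ¬(p.1 : ℕ) < l + 1 ∧ ¬(p.2 : ℕ) < l + 1 ∧ p.1 < p.2) = s₂ :=
    filter_congr fun p _ => by rw [Fin.lt_def]; omega
  have hcoeff := coeff_det_ite_C_mul_X (fun j : Fin (k + l + 2) => (j : ℕ) < l + 1)
    (of fun i j => a i ^ (l - (j : ℕ))) (of fun i j => a i ^ (k + l + 1 - (j : ℕ)))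
  rw [det_toSquareBlockProp_of_pow (Fin.castLEquiv (by omega)) (Fin.strictMono_castLEquiv _)
      a (fun j => l - (j : ℕ)) fun i => by simp,
    det_toSquareBlockProp_of_pow
      (Fin.subtypeNotLtEquiv (show l + 1 + (k + 1) = k + l + 2 by omega))
      (Fin.strictMono_subtypeNotLtEquiv _) a (fun j => k + l + 1 - (j : ℕ)) fun i => by
        simp [Fin.subtypeNotLtEquiv]; omega,
    hs₁, hs₂, prod_sub_swap s₁, prod_sub_swap s₂] at hcoeff
  refine ⟨#s₁ + #s₂, ?_⟩
  convert hcoeff using 1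
  · simp only [of_apply, Nat.lt_add_one_iff]
  · ring

theorem Finset.prod_sub_ne_zero_of_injective {ι R : Type*} [CommRing R] [IsDomain R]
    {a : ι → R} (ha : Function.Injective a) {s : Finset (ι × ι)} (hs : ∀ p ∈ s, p.1 ≠ p.2) :
    ∏ p ∈ s, (a p.2 - a p.1) ≠ 0 :=
  prod_ne_zero_iff.2 fun p hp => sub_ne_zero.2 (ha.ne (hs p hp).symm)

theorem stmt_18 (F : Type*) [Field F] (k l : ℕ) (a : Fin (k + l + 2) → F)
    (ha : Function.Injective a) :
    (Matrix.of fun i j : Fin (k + l + 2) => a i ^ (k + l + 1 - (j : ℕ))).det ≠ 0 ∧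
    (let P : MvPolynomial (Fin (k + l + 2)) F :=
        (Matrix.of fun i j : Fin (k + l + 2) =>
          if (j : ℕ) ≤ l then C (a i ^ (l - (j : ℕ))) * X i
          else (C (a i ^ (k + l + 1 - (j : ℕ))) : MvPolynomial (Fin (k + l + 2)) F)).det
     let m : Fin (k + l + 2) →₀ ℕ :=
        ∑ i ∈ Finset.univ.filter (fun i : Fin (k + l + 2) => (i : ℕ) < l + 1),
          Finsupp.single i 1
     let v1 : F := ∏ p ∈ Finset.univ.filter
          (fun p : Fin (k + l + 2) × Fin (k + l + 2) =>
            (p.1 : ℕ) < (p.2 : ℕ) ∧ (p.2 : ℕ) < l + 1), (a p.2 - a p.1)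
     let v2 : F := ∏ p ∈ Finset.univ.filter
          (fun p : Fin (k + l + 2) × Fin (k + l + 2) =>
            l + 1 ≤ (p.1 : ℕ) ∧ (p.1 : ℕ) < (p.2 : ℕ)), (a p.2 - a p.1)
     P ≠ 0 ∧ (P.coeff m = v1 * v2 ∨ P.coeff m = -(v1 * v2)) ∧ P.coeff m ≠ 0) := by
  refine ⟨?_, ?_⟩
  · rw [show k + l + 1 = k + l + 2 - 1 from rfl, det_of_pow_rev]
    exact prod_ne_zero_iff.2 fun i _ => prod_ne_zero_iff.2 fun j hj =>
      sub_ne_zero.2 (ha.ne (mem_Ioi.1 hj).ne)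
  intro P m v1 v2
  obtain ⟨c, hc⟩ := exists_coeff_evc_eq_neg_one_pow_mul k l a
  have hc : P.coeff m = (-1) ^ c * (v1 * v2) := hc
  have hv : v1 * v2 ≠ 0 := by
    refine mul_ne_zero (prod_sub_ne_zero_of_injective ha fun p hp => ?_)
      (prod_sub_ne_zero_of_injective ha fun p hp => ?_) <;>
    · simp only [mem_filter, mem_univ, true_and] at hp
      omega
  have hsign : P.coeff m = v1 * v2 ∨ P.coeff m = -(v1 * v2) := by
    rcases neg_one_pow_eq_or F c with h | h <;> simp [hc, h]
  have hne : P.coeff m ≠ 0 := by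
    rcases hsign with h | h <;> simpa [h] using hv
  exact ⟨fun h => hne (by rw [h, coeff_zero]), hsign, hne⟩
end
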